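/- arXiv:2203.05329 — 10 statements merged into one kernel-verified Lean document; each statement's English description precedes it below -/
import Mathlib

section
/- Let f : (X,d_X) → (Y,d) be a surjective large scale continuous map of metric spaces, and suppose (Y,d) has asymptotic dimension 0. Then the induced integral ultrametric d_f^ul is a well-defined metric on X and the map f : (X, d_f^ul) → (Y, d) is a coarse equivalence. -/
/-- `d` is a metric on the set `X`. -/
def IsMetricD {X : Type*} (d : X → X → ℝ) : Prop :=
  (∀ x, d x x = 0) ∧ (∀ x y, d x y = 0 → x = y) ∧ (∀ x y, d x y = d y x) ∧
    (∀ x y z, d x z ≤ d x y + d y z)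

/-- the ultrametric (strong triangle) inequality. -/
def IsUltraD {X : Type*} (d : X → X → ℝ) : Prop :=
  ∀ x y z, d x z ≤ max (d x y) (d y z)

/-- There is an `r`-chain joining `a` and `b`. -/
def ChainD {Y : Type*} (d : Y → Y → ℝ) (r : ℝ) (a b : Y) : Prop :=
  ∃ (k : ℕ) (c : ℕ → Y), c 0 = a ∧ c k = b ∧ ∀ i < k, d (c i) (c (i + 1)) < r

/-- asymptotic dimension 0: chains of uniformly bounded gauge are uniformly bounded. -/
def AsDimZeroD {Y : Type*} (d : Y → Y → ℝ) : Prop :=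
  ∀ r > (0 : ℝ), ∃ s > (0 : ℝ), ∀ a b : Y, ChainD d r a b → d a b ≤ s

/-- large scale continuous (uniformly bornologous). -/
def LSCD {X Y : Type*} (dX : X → X → ℝ) (dY : Y → Y → ℝ) (f : X → Y) : Prop :=
  ∀ R > (0 : ℝ), ∃ s > (0 : ℝ), ∀ x y : X, dX x y ≤ R → dY (f x) (f y) ≤ s

/-- uniformly proper. -/
def UnifProperD {X Y : Type*} (dX : X → X → ℝ) (dY : Y → Y → ℝ) (f : X → Y) : Prop :=
  ∀ R > (0 : ℝ), ∃ s > (0 : ℝ), ∀ x y : X, dY (f x) (f y) ≤ R → dX x y ≤ s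

/-- coarsely surjective. -/
def CoarselySurjD {X Y : Type*} (dY : Y → Y → ℝ) (f : X → Y) : Prop :=
  ∃ R > (0 : ℝ), ∀ y : Y, ∃ x : X, dY (f x) y ≤ R

/-- coarse embedding. -/
def CoarseEmbD {X Y : Type*} (dX : X → X → ℝ) (dY : Y → Y → ℝ) (f : X → Y) : Prop :=
  LSCD dX dY f ∧ UnifProperD dX dY f

/-- coarse equivalence. -/
def CoarseEquivD {X Y : Type*} (dX : X → X → ℝ) (dY : Y → Y → ℝ) (f : X → Y) : Prop :=
  LSCD dX dY f ∧ UnifProperD dX dY f ∧ CoarselySurjD dY f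

/-- the induced integral ultrametric `d_f^ul`. -/
noncomputable def dulD {X Y : Type*} (d : Y → Y → ℝ) (f : X → Y) (x y : X) : ℝ :=
  letI := Classical.decEq X
  if x = y then 0 else
    ((sInf {r : ℕ | 1 ≤ r ∧ ChainD d (r : ℝ) (f x) (f y)} : ℕ) : ℝ)

/-- `d` is a metric on the subset `A`. -/
def IsMetricOnD {X : Type*} (d : X → X → ℝ) (A : Set X) : Prop :=
  (∀ x ∈ A, d x x = 0) ∧ (∀ x ∈ A, ∀ y ∈ A, d x y = 0 → x = y) ∧
    (∀ x ∈ A, ∀ y ∈ A, d x y = d y x) ∧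
    (∀ x ∈ A, ∀ y ∈ A, ∀ z ∈ A, d x z ≤ d x y + d y z)

/-- the ultrametric inequality on a subset. -/
def IsUltraOnD {X : Type*} (d : X → X → ℝ) (A : Set X) : Prop :=
  ∀ x ∈ A, ∀ y ∈ A, ∀ z ∈ A, d x z ≤ max (d x y) (d y z)

/-- every triangle is isosceles. -/
def IsoscelesD {X : Type*} (d : X → X → ℝ) : Prop :=
  ∀ x y z : X, d x y = d y z ∨ d x y = d x z ∨ d y z = d x z

/-- every triangle with vertices in `A` is isosceles. -/
def IsoscelesOnD {X : Type*} (d : X → X → ℝ) (A : Set X) : Prop :=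
  ∀ x ∈ A, ∀ y ∈ A, ∀ z ∈ A, d x y = d y z ∨ d x y = d x z ∨ d y z = d x z

/-- a set is bounded with respect to the distance function `d`. -/
def BoundedD {X : Type*} (d : X → X → ℝ) (A : Set X) : Prop :=
  ∃ C : ℝ, ∀ x ∈ A, ∀ y ∈ A, d x y ≤ C

/-- `d` makes the disjoint union `Σ s, X s` a coarse disjoint union of the family
of metrics `ds`. -/
def IsCoarseDisjointUnion {S : Type*} {X : S → Type*} (ds : ∀ s, X s → X s → ℝ)
    (d : (Σ s, X s) → (Σ s, X s) → ℝ) : Prop :=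
  (∀ (s : S) (x y : X s), d ⟨s, x⟩ ⟨s, y⟩ = ds s x y) ∧
    ∀ M > (0 : ℝ), ∃ B : ∀ s, Set (X s),
      (∀ s, BoundedD (ds s) (B s)) ∧ {s | (B s).Nonempty}.Finite ∧
      ∀ (s t : S) (x : X s) (y : X t), s ≠ t → x ∉ B s → y ∉ B t → d ⟨s, x⟩ ⟨t, y⟩ > M

/-!
`d_f^ul(x, y)` is the least integer scale `r ≥ 1` at which `f x` and `f y` can be joined by an
`r`-chain (and `0` on the diagonal). Concatenating chains gives the ultrametric inequality, and
off the diagonal the value is at least `1`, so `d_f^ul` is a metric even when `f` is not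
injective. A single step is a chain, so `d(f x, f y) ≤ R` forces `d_f^ul(x, y) ≤ ⌈R⌉ + 1`:
`f` is uniformly proper. Conversely `f x` and `f y` are joined by a `d_f^ul(x, y)`-chain, so
asymptotic dimension `0` bounds `d(f x, f y)` in terms of `d_f^ul(x, y)`: `f` is large scale
continuous. Coarse surjectivity is surjectivity.
-/

namespace ChainD

variable {Y : Type*} {d : Y → Y → ℝ} {r r' : ℝ} {a b e : Y}

theorem refl (d : Y → Y → ℝ) (r : ℝ) (a : Y) : ChainD d r a a :=
  ⟨0, fun _ => a, rfl, rfl, fun _ hi => absurd hi (Nat.not_lt_zero _)⟩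

theorem of_lt (h : d a b < r) : ChainD d r a b := by
  refine ⟨1, fun i => if i = 0 then a else b, by simp, by simp, fun i hi => ?_⟩
  obtain rfl : i = 0 := by omega
  simpa using h

theorem mono (hrr' : r ≤ r') (h : ChainD d r a b) : ChainD d r' a b := by
  obtain ⟨k, c, h0, hk, hc⟩ := h
  exact ⟨k, c, h0, hk, fun i hi => (hc i hi).trans_le hrr'⟩

theorem trans (h₁ : ChainD d r a b) (h₂ : ChainD d r b e) : ChainD d r a e := by
  obtain ⟨k, c, rfl, rfl, hc⟩ := h₁
  obtain ⟨l, c', hc'0, rfl, hc'⟩ := h₂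
  set c'' : ℕ → Y := fun i => if i ≤ k then c i else c' (i - k)
  have tail : ∀ i, k ≤ i → c'' i = c' (i - k) := by
    intro i hi
    rcases hi.eq_or_lt with rfl | hi
    · simp [c'', hc'0]
    · simp [c'', Nat.not_le.mpr hi]
  refine ⟨k + l, c'', by simp [c''], by rw [tail _ (by omega), Nat.add_sub_cancel_left], ?_⟩
  intro i hi
  rcases lt_or_ge i k with hik | hik
  · simpa [c'', hik.le, Nat.succ_le_of_lt hik] using hc i hik
  · rw [tail i hik, tail (i + 1) (by omega), Nat.sub_add_comm hik]
    exact hc' _ (by omega)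

theorem symm [PseudoMetricSpace Y] (h : ChainD dist r a b) : ChainD dist r b a := by
  obtain ⟨k, c, rfl, rfl, hc⟩ := h
  refine ⟨k, fun i => c (k - i), by simp, by simp, fun i hi => ?_⟩
  have hk : k - i = k - (i + 1) + 1 := by omega
  simpa only [hk, dist_comm] using hc (k - (i + 1)) (by omega)

end ChainD

noncomputable def chainScale {Y : Type*} (d : Y → Y → ℝ) (a b : Y) : ℕ :=
  sInf {r : ℕ | 1 ≤ r ∧ ChainD d r a b}

section chainScale

variable {Y : Type*}

theorem chainScale_le {d : Y → Y → ℝ} {a b : Y} {r : ℕ} (hr : 1 ≤ r) (h : ChainD d r a b) :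
    chainScale d a b ≤ r :=
  Nat.sInf_le ⟨hr, h⟩

variable [PseudoMetricSpace Y]

theorem one_le_chainScale_and_chainD (a b : Y) :
    1 ≤ chainScale dist a b ∧ ChainD dist (chainScale dist a b) a b := by
  refine Nat.sInf_mem (s := {r : ℕ | 1 ≤ r ∧ ChainD dist r a b})
    ⟨⌈dist a b⌉₊ + 1, by omega, ChainD.of_lt ?_⟩
  push_cast
  linarith [Nat.le_ceil (dist a b)]

theorem chainScale_comm (a b : Y) : chainScale dist a b = chainScale dist b a := by
  unfold chainScale
  congr 1
  ext r
  exact and_congr_right fun _ => ⟨ChainD.symm, ChainD.symm⟩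

theorem chainScale_le_max (a b e : Y) :
    chainScale dist a e ≤ max (chainScale dist a b) (chainScale dist b e) := by
  obtain ⟨hab₁, hab⟩ := one_le_chainScale_and_chainD a b
  obtain ⟨hbe₁, hbe⟩ := one_le_chainScale_and_chainD b e
  refine chainScale_le (hab₁.trans (le_max_left _ _)) ?_
  exact (hab.mono (by exact_mod_cast le_max_left _ _)).trans
    (hbe.mono (by exact_mod_cast le_max_right _ _))

end chainScale

section dulD

variable {X Y : Type*}

theorem dulD_self (d : Y → Y → ℝ) (f : X → Y) (x : X) : dulD d f x x = 0 := by
  simp [dulD]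

theorem dulD_of_ne (d : Y → Y → ℝ) (f : X → Y) {x y : X} (h : x ≠ y) :
    dulD d f x y = chainScale d (f x) (f y) := by
  simp [dulD, h, chainScale]

theorem dulD_le_chainScale (d : Y → Y → ℝ) (f : X → Y) (x y : X) :
    dulD d f x y ≤ chainScale d (f x) (f y) := by
  by_cases h : x = y
  · rw [h, dulD_self]
    positivity
  · rw [dulD_of_ne d f h]

theorem dulD_nonneg (d : Y → Y → ℝ) (f : X → Y) (x y : X) : 0 ≤ dulD d f x y := by
  by_cases h : x = y
  · rw [h, dulD_self]
  · rw [dulD_of_ne d f h]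
    positivity

variable [PseudoMetricSpace Y] (f : X → Y)

theorem chainD_dulD (x y : X) : ChainD dist (dulD dist f x y) (f x) (f y) := by
  by_cases h : x = y
  · rw [h, dulD_self]
    exact ChainD.refl _ _ _
  · rw [dulD_of_ne dist f h]
    exact (one_le_chainScale_and_chainD _ _).2

theorem one_le_dulD {x y : X} (h : x ≠ y) : 1 ≤ dulD dist f x y := by
  rw [dulD_of_ne dist f h]
  exact_mod_cast (one_le_chainScale_and_chainD _ _).1

theorem dulD_comm (x y : X) : dulD dist f x y = dulD dist f y x := by
  by_cases h : x = y
  · rw [h]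
  · rw [dulD_of_ne dist f h, dulD_of_ne dist f (Ne.symm h), chainScale_comm]

theorem isUltraD_dulD : IsUltraD (dulD dist f) := by
  intro x y z
  by_cases hxy : x = y
  · rw [hxy, dulD_self, max_eq_right (dulD_nonneg _ _ _ _)]
  by_cases hyz : y = z
  · rw [hyz, dulD_self, max_eq_left (dulD_nonneg _ _ _ _)]
  calc dulD dist f x z ≤ chainScale dist (f x) (f z) := dulD_le_chainScale _ _ _ _
    _ ≤ max (chainScale dist (f x) (f y) : ℝ) (chainScale dist (f y) (f z)) := by
      exact_mod_cast chainScale_le_max _ _ _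
    _ = max (dulD dist f x y) (dulD dist f y z) := by
      rw [dulD_of_ne dist f hxy, dulD_of_ne dist f hyz]

theorem isMetricD_dulD : IsMetricD (dulD dist f) := by
  refine ⟨dulD_self dist f, fun x y h => ?_, dulD_comm f, fun x y z => ?_⟩
  · by_contra hxy
    linarith [one_le_dulD f hxy]
  · exact (isUltraD_dulD f x y z).trans
      (max_le_add_of_nonneg (dulD_nonneg _ _ _ _) (dulD_nonneg _ _ _ _))

theorem lscd_dulD_of_asDimZeroD (hY : AsDimZeroD (dist : Y → Y → ℝ)) :
    LSCD (dulD dist f) dist f := by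
  intro R hR
  obtain ⟨s, hs, hbound⟩ := hY R hR
  exact ⟨s, hs, fun x y hxy => hbound _ _ ((chainD_dulD f x y).mono hxy)⟩

theorem unifProperD_dulD : UnifProperD (dulD dist f) dist f := by
  intro R _
  refine ⟨(⌈R⌉₊ + 1 : ℕ), by positivity, fun x y hxy => ?_⟩
  have hstep : dist (f x) (f y) < (⌈R⌉₊ + 1 : ℕ) := by
    push_cast
    linarith [Nat.le_ceil R]
  calc dulD dist f x y ≤ chainScale dist (f x) (f y) := dulD_le_chainScale _ _ _ _
    _ ≤ (⌈R⌉₊ + 1 : ℕ) := by exact_mod_cast chainScale_le (by omega) (ChainD.of_lt hstep)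

end dulD

theorem Function.Surjective.coarselySurjD {X Y : Type*} [PseudoMetricSpace Y] {f : X → Y}
    (hf : Function.Surjective f) : CoarselySurjD dist f := by
  refine ⟨1, one_pos, fun y => ?_⟩
  obtain ⟨x, rfl⟩ := hf y
  exact ⟨x, by simp⟩

theorem induced_integral_ultrametric_coarse_equivalence_general
    {X Y : Type*} [MetricSpace Y] (f : X → Y)
    (hsurj : Function.Surjective f)
    (hY : AsDimZeroD (dist : Y → Y → ℝ)) :
    IsMetricD (dulD (dist : Y → Y → ℝ) f) ∧
      CoarseEquivD (dulD (dist : Y → Y → ℝ) f) (dist : Y → Y → ℝ) f :=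
  ⟨isMetricD_dulD f, lscd_dulD_of_asDimZeroD f hY, unifProperD_dulD f, hsurj.coarselySurjD⟩

/-- If `f : (X, d_X) → (Y, d)` is surjective, large scale continuous,
and `(Y, d)` has asymptotic dimension 0, then the induced integral ultrametric
`d_f^ul` is a metric on `X` and `f : (X, d_f^ul) → (Y, d)` is a coarse equivalence. -/
theorem induced_integral_ultrametric_coarse_equivalence
    {X Y : Type*} [MetricSpace X] [MetricSpace Y] (f : X → Y)
    (hsurj : Function.Surjective f)
    (hlsc : LSCD (dist : X → X → ℝ) (dist : Y → Y → ℝ) f)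
    (hY : AsDimZeroD (dist : Y → Y → ℝ)) :
    IsMetricD (dulD (dist : Y → Y → ℝ) f) ∧
      CoarseEquivD (dulD (dist : Y → Y → ℝ) f) (dist : Y → Y → ℝ) f :=
  induced_integral_ultrametric_coarse_equivalence_general f hsurj hY
end

section
/- Every isosceles metric space (X,d) has asymptotic dimension 0; in fact, for every m > 0, any two points of X joined by an m-chain are at distance less than 2m. -/
/-! In an isosceles triangle, `d(x,z) ≤ max (d(x,y), 2 d(y,z))`: either `d(x,z)` equals one of the
other two sides, or `d(x,y) = d(y,z)` and the triangle inequality bounds `d(x,z)` by `2 d(y,z)`.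
Walking along an `m`-chain from `a`, the distance from `a` therefore never reaches `2m`. -/

theorem IsoscelesD.dist_le_max {X : Type*} [PseudoMetricSpace X]
    (h : IsoscelesD (dist : X → X → ℝ)) (x y z : X) :
    dist x z ≤ max (dist x y) (2 * dist y z) := by
  have htri := dist_triangle x y z
  rcases h x y z with hxy | hxz | hyz
  · exact le_max_of_le_right (by linarith)
  · exact le_max_of_le_left hxz.ge
  · exact le_max_of_le_right (by linarith [dist_nonneg (x := y) (y := z)])

theorem IsoscelesD.dist_lt_of_chainD {X : Type*} [PseudoMetricSpace X]
    (h : IsoscelesD (dist : X → X → ℝ)) {m : ℝ} (hm : 0 < m) {a b : X}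
    (hab : ChainD dist m a b) : dist a b < 2 * m := by
  obtain ⟨k, c, rfl, rfl, hc⟩ := hab
  suffices ∀ i ≤ k, dist (c 0) (c i) < 2 * m from this k le_rfl
  intro i
  induction i with
  | zero => intro _; simpa using hm
  | succ i ih =>
    intro hi
    calc dist (c 0) (c (i + 1))
        ≤ max (dist (c 0) (c i)) (2 * dist (c i) (c (i + 1))) := h.dist_le_max _ _ _
      _ < 2 * m := max_lt (ih (by omega)) (by linarith [hc i (by omega)])

theorem asDimZeroD_of_chainD_lt_mul {Y : Type*} {d : Y → Y → ℝ} {C : ℝ} (hC : 0 < C)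
    (hd : ∀ r > (0 : ℝ), ∀ a b : Y, ChainD d r a b → d a b < C * r) : AsDimZeroD d :=
  fun r hr => ⟨C * r, mul_pos hC hr, fun a b hab => (hd r hr a b hab).le⟩

/-- Every isosceles metric space has asymptotic dimension 0;
in fact any two points joined by an `m`-chain (`m > 0`) are at distance `< 2 * m`. -/
theorem isosceles_asdim_zero
    {X : Type*} [MetricSpace X] (h : IsoscelesD (dist : X → X → ℝ)) :
    AsDimZeroD (dist : X → X → ℝ) ∧
      ∀ m > (0 : ℝ), ∀ a b : X, ChainD (dist : X → X → ℝ) m a b → dist a b < 2 * m :=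
  have chain_bound : ∀ m > (0 : ℝ), ∀ a b : X, ChainD dist m a b → dist a b < 2 * m :=
    fun _ hm _ _ => h.dist_lt_of_chainD hm
  ⟨asDimZeroD_of_chainD_lt_mul two_pos chain_bound, chain_bound⟩
end

section
/- Let f : X → S be a surjective function from a set X onto a metric space (S, d_S), and for each t ∈ S let d_t be a metric on the fiber X_t := f^{-1}(t). Suppose the diameter of each X_t (with respect to d_t) is at most 0.5·d_S(u,t) for all u ≠ t in S. Then there is a unique metric d on X restricting to d_t on each fiber X_t and satisfying d(x,y) = d_S(f(x), f(y)) whenever f(x) ≠ f(y); in particular f : (X,d) → (S,d_S) is a metric resolution. Moreover, if all the fibers (X_t, d_t) and (S, d_S) are isosceles, then (X, d) is isosceles. -/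
/-!
Put `d x y := d_{f x}(x, y)` inside a fibre and `d_S(f x, f y)` across fibres; the two required
identities leave no other choice, which is uniqueness. The only triangle inequality that is not
inherited from a fibre or from `S` is the one for `x, z ∈ X_t` and `y ∉ X_t`, and there
`d(x, z) ≤ diam X_t ≤ 2 d_S(f y, t) = d(x, y) + d(y, z)`. A triangle meeting two fibres has two
sides measured by the same distance in `S`, so it is isosceles.
-/

theorem IsMetricD.nonneg {X : Type*} {d : X → X → ℝ} (hd : IsMetricD d) (x y : X) :
    0 ≤ d x y := by
  obtain ⟨hd0, -, hsymm, htri⟩ := hd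
  have := htri x y x
  rw [hd0, hsymm y x] at this
  linarith

theorem IsMetricOnD.nonneg {X : Type*} {d : X → X → ℝ} {A : Set X} (hd : IsMetricOnD d A)
    {x y : X} (hx : x ∈ A) (hy : y ∈ A) : 0 ≤ d x y := by
  have := hd.2.2.2 x hx y hy x hx
  rw [hd.1 x hx, hd.2.2.1 y hy x hx] at this
  linarith

section Glue

variable {X S : Type*} (f : X → S) (dS : S → S → ℝ) (dt : S → X → X → ℝ)

open Classical in
noncomputable def glueDist (x y : X) : ℝ :=
  if f x = f y then dt (f x) x y else dS (f x) (f y)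

variable {f dS dt}

theorem glueDist_of_eq {x y : X} (h : f x = f y) : glueDist f dS dt x y = dt (f x) x y :=
  if_pos h

theorem glueDist_of_ne {x y : X} (h : f x ≠ f y) : glueDist f dS dt x y = dS (f x) (f y) :=
  if_neg h

theorem eq_glueDist {d : X → X → ℝ} (h_eq : ∀ x y, f x = f y → d x y = dt (f x) x y)
    (h_ne : ∀ x y, f x ≠ f y → d x y = dS (f x) (f y)) : d = glueDist f dS dt := by
  funext x y
  by_cases hxy : f x = f y
  · rw [h_eq x y hxy, glueDist_of_eq hxy]
  · rw [h_ne x y hxy, glueDist_of_ne hxy]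

theorem glueDist_triangle (hS : IsMetricD dS) (hfib : ∀ t, IsMetricOnD (dt t) {x | f x = t})
    (hdiam : ∀ t u, u ≠ t → ∀ x y, f x = t → f y = t → dt t x y ≤ 2 * dS u t) (x y z : X) :
    glueDist f dS dt x z ≤ glueDist f dS dt x y + glueDist f dS dt y z := by
  by_cases hxy : f x = f y <;> by_cases hyz : f y = f z
  · rw [glueDist_of_eq hxy, glueDist_of_eq hyz, glueDist_of_eq (hxy.trans hyz), hxy]
    exact (hfib (f y)).2.2.2 x hxy y rfl z hyz.symm
  · have hxz : f x ≠ f z := fun h => hyz (hxy.symm.trans h)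
    rw [glueDist_of_eq hxy, glueDist_of_ne hyz, glueDist_of_ne hxz, hxy]
    linarith [(hfib (f y)).nonneg (x := x) (y := y) hxy rfl]
  · have hxz : f x ≠ f z := fun h => hxy (h.trans hyz.symm)
    rw [glueDist_of_ne hxy, glueDist_of_eq hyz, glueDist_of_ne hxz, hyz]
    linarith [(hfib (f z)).nonneg (x := y) (y := z) hyz rfl]
  · by_cases hxz : f x = f z
    · rw [glueDist_of_eq hxz, glueDist_of_ne hxy, glueDist_of_ne hyz, ← hxz]
      linarith [hdiam (f x) (f y) (Ne.symm hxy) x z rfl hxz.symm, hS.2.2.1 (f x) (f y)]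
    · rw [glueDist_of_ne hxy, glueDist_of_ne hyz, glueDist_of_ne hxz]
      exact hS.2.2.2 _ _ _

theorem isMetricD_glueDist (hS : IsMetricD dS) (hfib : ∀ t, IsMetricOnD (dt t) {x | f x = t})
    (hdiam : ∀ t u, u ≠ t → ∀ x y, f x = t → f y = t → dt t x y ≤ 2 * dS u t) :
    IsMetricD (glueDist f dS dt) := by
  refine ⟨fun x => ?_, fun x y h => ?_, fun x y => ?_, glueDist_triangle hS hfib hdiam⟩
  · rw [glueDist_of_eq rfl]
    exact (hfib (f x)).1 x rfl
  · by_cases hxy : f x = f y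
    · rw [glueDist_of_eq hxy] at h
      exact (hfib (f x)).2.1 x rfl y hxy.symm h
    · rw [glueDist_of_ne hxy] at h
      exact absurd (hS.2.1 _ _ h) hxy
  · by_cases hxy : f x = f y
    · rw [glueDist_of_eq hxy, glueDist_of_eq hxy.symm, hxy]
      exact (hfib (f y)).2.2.1 x hxy y rfl
    · rw [glueDist_of_ne hxy, glueDist_of_ne (Ne.symm hxy)]
      exact hS.2.2.1 _ _

theorem isoscelesD_glueDist (hS_symm : ∀ a b, dS a b = dS b a)
    (hfib : ∀ t, IsoscelesOnD (dt t) {x | f x = t}) (hS : IsoscelesD dS) :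
    IsoscelesD (glueDist f dS dt) := by
  intro x y z
  by_cases hxy : f x = f y <;> by_cases hyz : f y = f z
  · rw [glueDist_of_eq hxy, glueDist_of_eq hyz, glueDist_of_eq (hxy.trans hyz), hxy]
    exact hfib (f y) x hxy y rfl z hyz.symm
  · have hxz : f x ≠ f z := fun h => hyz (hxy.symm.trans h)
    rw [glueDist_of_ne hyz, glueDist_of_ne hxz, hxy]
    exact Or.inr (Or.inr rfl)
  · have hxz : f x ≠ f z := fun h => hxy (h.trans hyz.symm)
    rw [glueDist_of_ne hxy, glueDist_of_ne hxz, hyz]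
    exact Or.inr (Or.inl rfl)
  · by_cases hxz : f x = f z
    · rw [glueDist_of_ne hxy, glueDist_of_ne hyz, ← hxz, hS_symm (f y)]
      exact Or.inl rfl
    · rw [glueDist_of_ne hxy, glueDist_of_ne hyz, glueDist_of_ne hxz]
      exact hS _ _ _

end Glue

theorem metric_resolution_exists_unique_general
    {X S : Type*} (f : X → S) (dS : S → S → ℝ) (dt : S → X → X → ℝ)
    (hS : IsMetricD dS)
    (hfib : ∀ t : S, IsMetricOnD (dt t) {x | f x = t})
    (hdiam : ∀ t u : S, u ≠ t → ∀ x y : X, f x = t → f y = t →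
      dt t x y ≤ 0.5 * dS u t) :
    (∃! d : X → X → ℝ, IsMetricD d ∧
        (∀ x y : X, f x = f y → d x y = dt (f x) x y) ∧
        (∀ x y : X, f x ≠ f y → d x y = dS (f x) (f y))) ∧
    (∀ d : X → X → ℝ,
        (IsMetricD d ∧ (∀ x y : X, f x = f y → d x y = dt (f x) x y) ∧
          (∀ x y : X, f x ≠ f y → d x y = dS (f x) (f y))) →
        (∀ t : S, IsoscelesOnD (dt t) {x | f x = t}) → IsoscelesD dS →
        IsoscelesD d) := by
  have hdiam' : ∀ t u, u ≠ t → ∀ x y, f x = t → f y = t → dt t x y ≤ 2 * dS u t :=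
    fun t u hut x y hx hy => (hdiam t u hut x y hx hy).trans (by linarith [hS.nonneg u t])
  refine ⟨⟨glueDist f dS dt, ⟨isMetricD_glueDist hS hfib hdiam', fun _ _ => glueDist_of_eq,
    fun _ _ => glueDist_of_ne⟩, fun d ⟨_, h_eq, h_ne⟩ => eq_glueDist h_eq h_ne⟩, ?_⟩
  rintro d ⟨-, h_eq, h_ne⟩ hfib_iso hS_iso
  rw [eq_glueDist h_eq h_ne]
  exact isoscelesD_glueDist hS.2.2.1 hfib_iso hS_iso

/-- If the fibers of a surjection `f : X → (S, d_S)` carry metrics whose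
diameters are at most `0.5 * d_S(u, t)` for all `u ≠ t`, then there is a unique metric on `X`
restricting to the fiber metrics and making `f` a metric resolution; moreover if all fibers
and the base are isosceles, so is the total space. -/
theorem metric_resolution_exists_unique
    {X S : Type*} (f : X → S) (dS : S → S → ℝ) (dt : S → X → X → ℝ)
    (hsurj : Function.Surjective f) (hS : IsMetricD dS)
    (hfib : ∀ t : S, IsMetricOnD (dt t) {x | f x = t})
    (hdiam : ∀ t u : S, u ≠ t → ∀ x y : X, f x = t → f y = t →
      dt t x y ≤ 0.5 * dS u t) :
    (∃! d : X → X → ℝ, IsMetricD d ∧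
        (∀ x y : X, f x = f y → d x y = dt (f x) x y) ∧
        (∀ x y : X, f x ≠ f y → d x y = dS (f x) (f y))) ∧
    (∀ d : X → X → ℝ,
        (IsMetricD d ∧ (∀ x y : X, f x = f y → d x y = dt (f x) x y) ∧
          (∀ x y : X, f x ≠ f y → d x y = dS (f x) (f y))) →
        (∀ t : S, IsoscelesOnD (dt t) {x | f x = t}) → IsoscelesD dS →
        IsoscelesD d) :=
  metric_resolution_exists_unique_general f dS dt hS hfib hdiam
end

section
/- Let f : (X,d) → (S,d_S) be a surjective metric resolution where d_S is an ultrametric on S. If for each t ∈ S the restriction of d to the fiber X_t := f^{-1}(t) is an ultrametric and the diameter of each X_t is at most d_S(u,t) for all u ≠ t, then d is an ultrametric on X. -/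
section MetricResolution

variable {X S : Type*} {f : X → S} {d : X → X → ℝ} {dS : S → S → ℝ}

theorem dist_eq_of_fiber_eq_left (hres : ∀ x y : X, f x ≠ f y → d x y = dS (f x) (f y))
    {x x' y : X} (hx : f x = f x') (hxy : f x ≠ f y) : d x y = d x' y := by
  rw [hres x y hxy, hres x' y (hx ▸ hxy), hx]

theorem dist_eq_of_fiber_eq_right (hres : ∀ x y : X, f x ≠ f y → d x y = dS (f x) (f y))
    {x y y' : X} (hy : f y = f y') (hxy : f x ≠ f y) : d x y = d x y' := by
  rw [hres x y hxy, hres x y' (hy ▸ hxy), hy]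

theorem dist_le_of_fiber_eq_of_fiber_ne (hres : ∀ x y : X, f x ≠ f y → d x y = dS (f x) (f y))
    (hdiam : ∀ t u : S, u ≠ t → ∀ x y : X, f x = t → f y = t → d x y ≤ dS u t)
    {x y z : X} (hxz : f x = f z) (hyx : f y ≠ f x) : d x z ≤ d y z := by
  calc d x z ≤ dS (f y) (f x) := hdiam (f x) (f y) hyx x z rfl hxz.symm
    _ = d y z := by rw [hres y z (hxz ▸ hyx), hxz]

end MetricResolution

theorem metric_resolution_ultrametric_general
    {X S : Type*} (f : X → S) (d : X → X → ℝ) (dS : S → S → ℝ)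
    (hudS : IsUltraD dS)
    (hres : ∀ x y : X, f x ≠ f y → d x y = dS (f x) (f y))
    (hfib : ∀ t : S, IsUltraOnD d {x | f x = t})
    (hdiam : ∀ t u : S, u ≠ t → ∀ x y : X, f x = t → f y = t → d x y ≤ dS u t) :
    IsUltraD d := by
  intro x y z
  rcases eq_or_ne (f x) (f z) with hxz | hxz
  · rcases eq_or_ne (f y) (f x) with hyx | hyx
    · exact hfib (f x) x rfl y hyx z hxz.symm
    · exact le_max_of_le_right (dist_le_of_fiber_eq_of_fiber_ne hres hdiam hxz hyx)
  rcases eq_or_ne (f x) (f y) with hxy | hxy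
  · exact le_max_of_le_right (dist_eq_of_fiber_eq_left hres hxy hxz).le
  rcases eq_or_ne (f y) (f z) with hyz | hyz
  · exact le_max_of_le_left (dist_eq_of_fiber_eq_right hres hyz.symm hxz).le
  rw [hres x z hxz, hres x y hxy, hres y z hyz]
  exact hudS (f x) (f y) (f z)

/-- A metric resolution over an ultrametric base, with ultrametric fibers
whose diameters are at most `d_S(u,t)` for all `u ≠ t`, has ultrametric total space. -/
theorem metric_resolution_ultrametric
    {X S : Type*} (f : X → S) (d : X → X → ℝ) (dS : S → S → ℝ)
    (hsurj : Function.Surjective f)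
    (hd : IsMetricD d) (hdS : IsMetricD dS) (hudS : IsUltraD dS)
    (hres : ∀ x y : X, f x ≠ f y → d x y = dS (f x) (f y))
    (hfib : ∀ t : S, IsUltraOnD d {x | f x = t})
    (hdiam : ∀ t u : S, u ≠ t → ∀ x y : X, f x = t → f y = t → d x y ≤ dS u t) :
    IsUltraD d :=
  metric_resolution_ultrametric_general f d dS hudS hres hfib hdiam
end

section
/- Let (X,d) be an ultrametric space. Define ρ on the collection of nonempty bounded subsets of X by ρ(A,A) = 0 and ρ(A,B) = sup{ d(x,y) : x ∈ A, y ∈ B } for A ≠ B. Then ρ is an ultrametric on the set of nonempty bounded subsets of X. -/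
/-- The sup-distance on nonempty bounded subsets (`0` on the diagonal). -/
noncomputable def rhoD {X : Type*} [MetricSpace X] (A B : Set X) : ℝ :=
  letI := Classical.dec (A = B)
  if A = B then 0 else sSup {r : ℝ | ∃ x ∈ A, ∃ y ∈ B, r = dist x y}

/-!
Off the diagonal, `ρ(A, B)` is the supremum of `d` over `A × B`, finite because `A ∪ B` is
bounded. For `y ∈ B`, `x ∈ A`, `z ∈ C`, the ultrametric inequality in `X` gives
`d(x, z) ≤ max (d(x, y)) (d(y, z)) ≤ max (ρ(A, B)) (ρ(B, C))` as soon as `A ≠ B` and `B ≠ C`;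
otherwise the strong triangle inequality for `ρ` is trivial. If `ρ(A, B) = 0` with `A ≠ B`,
every point of `A` equals every point of `B`, which forces `A = B` since both are nonempty.
-/

section rhoD

open Bornology Metric

variable {X : Type*} [MetricSpace X] {A B C : Set X}

lemma rhoD_self (A : Set X) : rhoD A A = 0 := by
  simp [rhoD]

lemma rhoD_of_ne (h : A ≠ B) : rhoD A B = sSup (Set.image2 dist A B) := by
  rw [rhoD, if_neg h]
  congr 1
  ext r
  simp [eq_comm]

lemma rhoD_comm (A B : Set X) : rhoD A B = rhoD B A := by
  by_cases h : A = B
  · rw [h]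
  · rw [rhoD_of_ne h, rhoD_of_ne (Ne.symm h), Set.image2_swap]
    simp only [dist_comm]

lemma rhoD_nonneg (A B : Set X) : 0 ≤ rhoD A B := by
  by_cases h : A = B
  · rw [h, rhoD_self]
  · rw [rhoD_of_ne h]
    exact Real.sSup_nonneg (Set.forall_mem_image2.2 fun _ _ _ _ => dist_nonneg)

lemma dist_le_rhoD (hA : IsBounded A) (hB : IsBounded B) (h : A ≠ B) {x y : X}
    (hx : x ∈ A) (hy : y ∈ B) : dist x y ≤ rhoD A B := by
  have hbdd : BddAbove (Set.image2 dist A B) :=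
    ⟨diam (A ∪ B), Set.forall_mem_image2.2 fun _ hx _ hy =>
      dist_le_diam_of_mem (hA.union hB) (Or.inl hx) (Or.inr hy)⟩
  rw [rhoD_of_ne h]
  exact le_csSup hbdd (Set.mem_image2_of_mem hx hy)

lemma rhoD_le_of_forall_dist_le (hA : A.Nonempty) (hB : B.Nonempty) {c : ℝ}
    (h : ∀ x ∈ A, ∀ y ∈ B, dist x y ≤ c) : rhoD A B ≤ c := by
  by_cases hAB : A = B
  · obtain ⟨x, hx⟩ := hA
    rw [hAB, rhoD_self]
    exact dist_self x ▸ h x hx x (hAB ▸ hx)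
  · rw [rhoD_of_ne hAB]
    exact csSup_le (hA.image2 hB) (Set.forall_mem_image2.2 h)

lemma eq_of_rhoD_eq_zero (hA : IsBounded A) (hB : IsBounded B) (hA' : A.Nonempty)
    (hB' : B.Nonempty) (h : rhoD A B = 0) : A = B := by
  by_contra hAB
  have hxy : ∀ x ∈ A, ∀ y ∈ B, x = y := fun x hx y hy =>
    dist_le_zero.1 (h ▸ dist_le_rhoD hA hB hAB hx hy)
  refine hAB (Set.Subset.antisymm (fun x hx => ?_) (fun y hy => ?_))
  · obtain ⟨y, hy⟩ := hB'
    exact hxy x hx y hy ▸ hy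
  · obtain ⟨x, hx⟩ := hA'
    exact (hxy x hx y hy).symm ▸ hx

lemma rhoD_le_max [IsUltrametricDist X] (hA : IsBounded A) (hB : IsBounded B)
    (hC : IsBounded C) (hA' : A.Nonempty) (hB' : B.Nonempty) (hC' : C.Nonempty) :
    rhoD A C ≤ max (rhoD A B) (rhoD B C) := by
  by_cases hAB : A = B
  · rw [hAB, rhoD_self]
    exact le_max_right _ _
  by_cases hBC : B = C
  · rw [hBC, rhoD_self]
    exact le_max_left _ _
  obtain ⟨y, hy⟩ := hB'
  refine rhoD_le_of_forall_dist_le hA' hC' fun x hx z hz => ?_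
  calc dist x z ≤ max (dist x y) (dist y z) := dist_triangle_max x y z
    _ ≤ max (rhoD A B) (rhoD B C) :=
      max_le_max (dist_le_rhoD hA hB hAB hx hy) (dist_le_rhoD hB hC hBC hy hz)

end rhoD

/-- For an ultrametric space `(X, d)`, the function
`ρ(A, B) = sup { d(x, y) : x ∈ A, y ∈ B }` (with `ρ(A, A) = 0`) is an ultrametric
on the collection of nonempty bounded subsets of `X`. -/
theorem rho_ultrametric_on_bounded_subsets
    {X : Type*} [MetricSpace X] (hu : IsUltraD (dist : X → X → ℝ)) :
    IsMetricD (fun A B : {A : Set X // A.Nonempty ∧ Bornology.IsBounded A} =>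
        rhoD A.1 B.1) ∧
    IsUltraD (fun A B : {A : Set X // A.Nonempty ∧ Bornology.IsBounded A} =>
        rhoD A.1 B.1) := by
  have : IsUltrametricDist X := ⟨hu⟩
  have ultra : IsUltraD (fun A B : {A : Set X // A.Nonempty ∧ Bornology.IsBounded A} =>
      rhoD A.1 B.1) := fun A B C =>
    rhoD_le_max A.2.2 B.2.2 C.2.2 A.2.1 B.2.1 C.2.1
  refine ⟨⟨fun A => rhoD_self A.1, fun A B h => ?_, fun A B => rhoD_comm A.1 B.1,
    fun A B C => ?_⟩, ultra⟩
  · exact Subtype.ext (eq_of_rhoD_eq_zero A.2.2 B.2.2 A.2.1 B.2.1 h)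
  · exact (ultra A B C).trans (max_le_add_of_nonneg (rhoD_nonneg _ _) (rhoD_nonneg _ _))
end

section
/- Let {(X_s, d_s)}_{s∈S} be a family of metric spaces and let d be a metric on the disjoint union ⨿_{s∈S} X_s restricting to d_s on each X_s. Then (⨿_{s∈S} X_s, d) is a coarse disjoint union of the family if and only if the following two conditions hold: (i) for every sequence {x_n}_{n≥1} of points of ⨿_{s∈S} X_s belonging to pairwise distinct parts X_s, one has d(a, x_n) → ∞ for every point a; (ii) for every M > 0 and every sequence of pairs (x_n, y_n) with d(x_n, y_n) < M for all n and d(a, x_n) → ∞ for some point a, there is k ≥ 1 such that for every n ≥ k there is an index s ∈ S with x_n, y_n ∈ X_s. -/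
/-!
If `(Σ s, X s, d)` is a coarse disjoint union, a sequence in distinct parts eventually avoids
the finitely many nonempty sets `B s` chosen at scale `2M`, so no two of its late terms can both
lie within `M` of a fixed point; and a pair in different parts at distance `< M` has an entry in
`⋃ B s`, a bounded set, so such pairs cannot diverge.

Conversely, at scale `M` let `B s` be the points of `X s` within `M` of another part. These sets
separate the parts by construction, and an unbounded `B s`, or infinitely many nonempty ones,
would give a divergent sequence (by (i) in the second case) of points within `M` of other parts,
which (ii) forbids.
-/

open Filter Set

namespace IsMetricD

variable {α : Type*} {d : α → α → ℝ}

theorem symm (hd : IsMetricD d) (x y : α) : d x y = d y x := hd.2.2.1 x y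

theorem triangle (hd : IsMetricD d) (x y z : α) : d x z ≤ d x y + d y z := hd.2.2.2 x y z

theorem triangle_left (hd : IsMetricD d) (x y z : α) : d y z ≤ d x y + d x z := by
  have h := hd.triangle y x z
  rwa [hd.symm y x] at h

end IsMetricD

section General

variable {α : Type*} {d : α → α → ℝ}

theorem BoundedD.bddAbove_image (hd : IsMetricD d) {A : Set α} (hA : BoundedD d A) (a : α) :
    BddAbove (d a '' A) := by
  obtain ⟨C, hC⟩ := hA
  rcases A.eq_empty_or_nonempty with rfl | ⟨b, hb⟩
  · simp
  · refine ⟨d a b + C, ?_⟩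
    rintro _ ⟨x, hx, rfl⟩
    linarith [hd.triangle a b x, hC b hb x hx]

theorem exists_seq_tendsto_of_not_boundedD (hd : IsMetricD d) {A : Set α}
    (hA : ¬BoundedD d A) (a : α) :
    ∃ z : ℕ → α, (∀ n, z n ∈ A) ∧ Tendsto (fun n => d a (z n)) atTop atTop := by
  have hfar : ∀ n : ℕ, ∃ z ∈ A, (n : ℝ) ≤ d a z := by
    intro n
    obtain ⟨u, hu, v, hv, huv⟩ : ∃ u ∈ A, ∃ v ∈ A, 2 * (n : ℝ) < d u v := by
      simp only [BoundedD, not_exists, not_forall, not_le, exists_prop] at hA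
      exact hA _
    by_contra! h
    linarith [hd.triangle_left a u v, h u hu, h v hv]
  choose z hzA hz using hfar
  exact ⟨z, hzA, tendsto_atTop_mono hz tendsto_natCast_atTop_atTop⟩

end General

section Sigma

variable {S : Type*} {X : S → Type*} {ds : ∀ s, X s → X s → ℝ}
  {d : (Σ s, X s) → (Σ s, X s) → ℝ}

theorem boundedD_image_sigmaMk_iff (hres : ∀ (s : S) (x y : X s), d ⟨s, x⟩ ⟨s, y⟩ = ds s x y)
    {s : S} {A : Set (X s)} : BoundedD d (Sigma.mk s '' A) ↔ BoundedD (ds s) A := by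
  simp [BoundedD, hres]

theorem bddAbove_dist_image_sigma (hd : IsMetricD d)
    (hres : ∀ (s : S) (x y : X s), d ⟨s, x⟩ ⟨s, y⟩ = ds s x y) {B : ∀ s, Set (X s)}
    (hB : ∀ s, BoundedD (ds s) (B s)) (hfin : {s | (B s).Nonempty}.Finite) (a : Σ s, X s) :
    BddAbove (d a '' univ.sigma B) := by
  refine (hfin.bddAbove_biUnion.2 fun s _ =>
    ((boundedD_image_sigmaMk_iff hres).2 (hB s)).bddAbove_image hd a).mono ?_
  rintro _ ⟨⟨s, x⟩, ⟨-, hx⟩, rfl⟩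
  exact mem_biUnion (x := s) ⟨x, hx⟩ ⟨⟨s, x⟩, ⟨x, hx, rfl⟩, rfl⟩

variable (d) in
def DistinctPartsDiverge : Prop :=
  ∀ x : ℕ → Σ s, X s, (∀ n m : ℕ, n ≠ m → (x n).1 ≠ (x m).1) →
    ∀ a, Tendsto (fun n => d a (x n)) atTop atTop

variable (d) in
def CloseDivergentPairsSamePart : Prop :=
  ∀ M > (0 : ℝ), ∀ x y : ℕ → Σ s, X s, (∀ n, d (x n) (y n) < M) →
    (∃ a, Tendsto (fun n => d a (x n)) atTop atTop) → ∃ k, ∀ n ≥ k, (x n).1 = (y n).1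

theorem IsCoarseDisjointUnion.distinctPartsDiverge (h : IsCoarseDisjointUnion ds d)
    (hd : IsMetricD d) : DistinctPartsDiverge d := by
  intro x hx a
  have hinj : Function.Injective fun n => (x n).1 := fun n m => not_imp_not.1 (hx n m)
  rw [tendsto_atTop, ← Nat.cofinite_eq_atTop]
  intro M
  obtain ⟨B, -, hfin, hfar⟩ := h.2 (2 * max M 1) (by positivity)
  have hinB : {n | (x n).2 ∈ B (x n).1}.Finite :=
    (hfin.preimage hinj.injOn).subset fun n hn => ⟨_, hn⟩
  rw [eventually_cofinite, ← not_infinite]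
  intro hinf
  obtain ⟨m, ⟨hm, hmB⟩, n, ⟨hn, hnB⟩, hmn⟩ := (hinf.sdiff hinB).nontrivial
  have hsep : d (x m) (x n) > 2 * max M 1 := hfar _ _ _ _ (hx m n hmn) hmB hnB
  linarith [hd.triangle_left a (x m) (x n), not_le.1 hm, not_le.1 hn, le_max_left M 1]

theorem IsCoarseDisjointUnion.closeDivergentPairsSamePart (h : IsCoarseDisjointUnion ds d)
    (hd : IsMetricD d) : CloseDivergentPairsSamePart d := by
  rintro M hM x y hxy ⟨a, ha⟩
  obtain ⟨B, hB, hfin, hfar⟩ := h.2 M hM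
  obtain ⟨K, hK⟩ := bddAbove_dist_image_sigma hd h.1 hB hfin a
  refine eventually_atTop.1 ?_
  filter_upwards [ha.eventually_gt_atTop (K + M)] with n hn
  by_contra hne
  have hmem : x n ∈ univ.sigma B ∨ y n ∈ univ.sigma B := by
    by_contra! hout
    have hsep : d (x n) (y n) > M :=
      hfar _ _ _ _ hne (fun hx => hout.1 ⟨trivial, hx⟩) (fun hy => hout.2 ⟨trivial, hy⟩)
    linarith [hxy n]
  rcases hmem with hx | hy
  · linarith [hK ⟨x n, hx, rfl⟩]
  · linarith [hK ⟨y n, hy, rfl⟩, hd.triangle a (y n) (x n), hd.symm (y n) (x n), hxy n]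

variable (d) in
def nearOtherParts (M : ℝ) : Set (Σ s, X s) :=
  {z | ∃ w, z.1 ≠ w.1 ∧ d z w ≤ M}

theorem not_tendsto_of_mem_nearOtherParts
    (h2 : CloseDivergentPairsSamePart d)
    {M : ℝ} (hM : 0 < M) {z : ℕ → Σ s, X s} (hz : ∀ n, z n ∈ nearOtherParts d M)
    (a : Σ s, X s) : ¬Tendsto (fun n => d a (z n)) atTop atTop := by
  intro ha
  choose w hw hzw using hz
  obtain ⟨k, hk⟩ := h2 (M + 1) (by linarith) z w (fun n => (hzw n).trans_lt (lt_add_one M))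
    ⟨a, ha⟩
  exact hw k (hk k le_rfl)

theorem boundedD_preimage_nearOtherParts (hd : IsMetricD d)
    (hres : ∀ (s : S) (x y : X s), d ⟨s, x⟩ ⟨s, y⟩ = ds s x y)
    (h2 : CloseDivergentPairsSamePart d)
    {M : ℝ} (hM : 0 < M) (s : S) : BoundedD (ds s) (Sigma.mk s ⁻¹' nearOtherParts d M) := by
  rw [← boundedD_image_sigmaMk_iff hres]
  by_contra hunb
  obtain ⟨a, -⟩ : (Sigma.mk s '' (Sigma.mk s ⁻¹' nearOtherParts d M)).Nonempty :=
    nonempty_iff_ne_empty.2 fun h0 => hunb ⟨0, by simp [h0]⟩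
  obtain ⟨z, hzA, hz⟩ := exists_seq_tendsto_of_not_boundedD hd hunb a
  exact not_tendsto_of_mem_nearOtherParts h2 hM (fun n => image_preimage_subset _ _ (hzA n)) a hz

theorem finite_nonempty_preimage_nearOtherParts
    (h1 : DistinctPartsDiverge d)
    (h2 : CloseDivergentPairsSamePart d)
    {M : ℝ} (hM : 0 < M) : {s | (Sigma.mk s ⁻¹' nearOtherParts d M).Nonempty}.Finite := by
  by_contra hinf
  let e := Set.Infinite.natEmbedding _ hinf
  choose x hx using fun n => (e n).2
  have hdiv := h1 (fun n => ⟨e n, x n⟩) (fun n m hnm h => hnm (e.injective (Subtype.ext h)))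
    ⟨e 0, x 0⟩
  exact not_tendsto_of_mem_nearOtherParts h2 hM hx _ hdiv

end Sigma

theorem coarse_disjoint_union_iff_sequences_general
    {S : Type*} {X : S → Type*} (ds : ∀ s, X s → X s → ℝ)
    (d : (Σ s, X s) → (Σ s, X s) → ℝ)
    (hd : IsMetricD d)
    (hres : ∀ (s : S) (x y : X s), d ⟨s, x⟩ ⟨s, y⟩ = ds s x y) :
    IsCoarseDisjointUnion ds d ↔
      ((∀ x : ℕ → Σ s, X s, (∀ n m : ℕ, n ≠ m → (x n).1 ≠ (x m).1) →
          ∀ a : Σ s, X s, Filter.Tendsto (fun n => d a (x n)) Filter.atTop Filter.atTop) ∧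
       (∀ M > (0 : ℝ), ∀ x y : ℕ → Σ s, X s, (∀ n : ℕ, d (x n) (y n) < M) →
          (∃ a : Σ s, X s, Filter.Tendsto (fun n => d a (x n)) Filter.atTop Filter.atTop) →
          ∃ k : ℕ, ∀ n ≥ k, (x n).1 = (y n).1)) := by
  constructor
  · exact fun h => ⟨h.distinctPartsDiverge hd, h.closeDivergentPairsSamePart hd⟩
  · rintro ⟨h1, h2⟩
    refine ⟨hres, fun M hM => ⟨fun s => Sigma.mk s ⁻¹' nearOtherParts d M,
      boundedD_preimage_nearOtherParts hd hres h2 hM,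
      finite_nonempty_preimage_nearOtherParts h1 h2 hM, ?_⟩⟩
    intro s t x y hst hx _
    by_contra! hle
    exact hx ⟨⟨t, y⟩, hst, hle⟩

/-- A metric `d` on a disjoint union restricting to the given metrics on
the parts makes it a coarse disjoint union if and only if: (i) every sequence of points in
pairwise distinct parts diverges to infinity, and (ii) for every `M > 0`, any sequence of
pairs at distance `< M` which diverges to infinity eventually has both entries in the
same part. -/
theorem coarse_disjoint_union_iff_sequences
    {S : Type*} {X : S → Type*} (ds : ∀ s, X s → X s → ℝ)
    (d : (Σ s, X s) → (Σ s, X s) → ℝ)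
    (hds : ∀ s, IsMetricD (ds s)) (hd : IsMetricD d)
    (hres : ∀ (s : S) (x y : X s), d ⟨s, x⟩ ⟨s, y⟩ = ds s x y) :
    IsCoarseDisjointUnion ds d ↔
      ((∀ x : ℕ → Σ s, X s, (∀ n m : ℕ, n ≠ m → (x n).1 ≠ (x m).1) →
          ∀ a : Σ s, X s, Filter.Tendsto (fun n => d a (x n)) Filter.atTop Filter.atTop) ∧
       (∀ M > (0 : ℝ), ∀ x y : ℕ → Σ s, X s, (∀ n : ℕ, d (x n) (y n) < M) →
          (∃ a : Σ s, X s, Filter.Tendsto (fun n => d a (x n)) Filter.atTop Filter.atTop) →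
          ∃ k : ℕ, ∀ n ≥ k, (x n).1 = (y n).1)) :=
  coarse_disjoint_union_iff_sequences_general ds d hd hres
end

section
/- Let f : X → (S, d_S) be a surjective function, and equip X with the metric d obtained by splicing metrics on the fibers of f along a section g : S → X. If (S, d_S) is a coarse disjoint union of its points, then (X, d) is a coarse disjoint union of the fibers of f. -/
/-! Choose a finite set `BS ⊆ S` off which distinct points of `S` are more than `M` apart. Over
`t ∈ BS` take as exceptional set the `d_t`-ball of radius `M` about the section point `g t`, which
is bounded by the triangle inequality in the fiber. Two points in distinct fibers outside these
sets are more than `M` apart, because the spliced distance dominates both `d_S` of the base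
points and `d_t` from each point to the section. -/

theorem BoundedD.mono {X : Type*} {d : X → X → ℝ} {A B : Set X} (hB : BoundedD d B)
    (hAB : A ⊆ B) : BoundedD d A :=
  let ⟨C, hC⟩ := hB
  ⟨C, fun x hx y hy => hC x (hAB hx) y (hAB hy)⟩

theorem BoundedD.congr {X : Type*} {d ρ : X → X → ℝ} {A : Set X} (hρ : BoundedD ρ A)
    (heq : ∀ x ∈ A, ∀ y ∈ A, d x y = ρ x y) : BoundedD d A :=
  let ⟨C, hC⟩ := hρ
  ⟨C, fun x hx y hy => (heq x hx y hy).trans_le (hC x hx y hy)⟩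

theorem IsMetricOnD.boundedD_closedBall {X : Type*} {ρ : X → X → ℝ} {A : Set X}
    (hρ : IsMetricOnD ρ A) {c : X} (hc : c ∈ A) (r : ℝ) :
    BoundedD ρ {x | x ∈ A ∧ ρ x c ≤ r} := by
  obtain ⟨-, -, hsymm, htri⟩ := hρ
  refine ⟨r + r, fun x ⟨hxA, hxc⟩ y ⟨hyA, hyc⟩ => ?_⟩
  calc ρ x y ≤ ρ x c + ρ c y := htri x hxA c hc y hyA
    _ ≤ r + r := add_le_add hxc (hsymm c hc y hyA ▸ hyc)

theorem splicing_coarse_disjoint_union_of_fibers_general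
    {X S : Type*} (f : X → S) (dS : S → S → ℝ) (dt : S → X → X → ℝ)
    (g : S → X) (d : X → X → ℝ)
    (hsec : ∀ s : S, f (g s) = s)
    (hfib : ∀ t : S, IsMetricOnD (dt t) {x | f x = t})
    (hd1 : ∀ x y : X, f x = f y → d x y = dt (f x) x y)
    (hd2 : ∀ x y : X, f x ≠ f y →
      d x y = max (dS (f x) (f y))
        (max (dt (f x) x (g (f x))) (dt (f y) y (g (f y)))))
    (hSsep : ∀ M > (0 : ℝ), ∃ B : Set S, B.Finite ∧
      ∀ u ∉ B, ∀ t ∉ B, u ≠ t → dS u t > M) :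
    ∀ M > (0 : ℝ), ∃ B : S → Set X,
      (∀ t : S, B t ⊆ {x | f x = t}) ∧ (∀ t : S, BoundedD d (B t)) ∧
      {t | (B t).Nonempty}.Finite ∧
      ∀ x y : X, f x ≠ f y → x ∉ B (f x) → y ∉ B (f y) → d x y > M := by
  intro M hM
  obtain ⟨BS, hBSfin, hBSsep⟩ := hSsep M hM
  refine ⟨fun t => {x | f x = t ∧ t ∈ BS ∧ dt t x (g t) ≤ M}, fun t x hx => hx.1, fun t => ?_,
    hBSfin.subset fun t ⟨x, hx⟩ => hx.2.1, fun x y hne hx hy => ?_⟩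
  · have hball := (hfib t).boundedD_closedBall (hsec t) M
    refine (hball.mono fun x hx => ⟨hx.1, hx.2.2⟩).congr fun x hx y hy => ?_
    rw [hd1 x y (hx.1.trans hy.1.symm), hx.1]
  · have hfar : M < dS (f x) (f y) ∨ M < dt (f x) x (g (f x)) ∨ M < dt (f y) y (g (f y)) := by
      by_cases hxS : f x ∈ BS
      · exact Or.inr (Or.inl (lt_of_not_ge fun h => hx ⟨rfl, hxS, h⟩))
      by_cases hyS : f y ∈ BS
      · exact Or.inr (Or.inr (lt_of_not_ge fun h => hy ⟨rfl, hyS, h⟩))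
      exact Or.inl (hBSsep _ hxS _ hyS hne)
    rw [hd2 x y hne, gt_iff_lt, lt_max_iff, lt_max_iff]
    exact hfar

/-- If `X` carries the splicing metric along a section of `f : X → S` and
`(S, d_S)` is a coarse disjoint union of its points, then `X` is a coarse disjoint union of
the fibers of `f`. -/
theorem splicing_coarse_disjoint_union_of_fibers
    {X S : Type*} (f : X → S) (dS : S → S → ℝ) (dt : S → X → X → ℝ)
    (g : S → X) (d : X → X → ℝ)
    (hsurj : Function.Surjective f) (hsec : ∀ s : S, f (g s) = s)
    (hS : IsMetricD dS) (hfib : ∀ t : S, IsMetricOnD (dt t) {x | f x = t})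
    (hd1 : ∀ x y : X, f x = f y → d x y = dt (f x) x y)
    (hd2 : ∀ x y : X, f x ≠ f y →
      d x y = max (dS (f x) (f y))
        (max (dt (f x) x (g (f x))) (dt (f y) y (g (f y)))))
    (hSproper : ∀ B : Set S, BoundedD dS B → B.Finite)
    (hSsep : ∀ M > (0 : ℝ), ∃ B : Set S, B.Finite ∧
      ∀ u ∉ B, ∀ t ∉ B, u ≠ t → dS u t > M) :
    ∀ M > (0 : ℝ), ∃ B : S → Set X,
      (∀ t : S, B t ⊆ {x | f x = t}) ∧ (∀ t : S, BoundedD d (B t)) ∧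
      {t | (B t).Nonempty}.Finite ∧
      ∀ x y : X, f x ≠ f y → x ∉ B (f x) → y ∉ B (f y) → d x y > M :=
  splicing_coarse_disjoint_union_of_fibers_general f dS dt g d hsec hfib hd1 hd2 hSsep
end

section
/- Every nonempty integral ultrametric space (X, d) can be partitioned into countably many bounded subsets {X_s}_{s∈S} such that (X, d) is a coarse disjoint union of the family {X_s}_{s∈S} (with each X_s carrying the restricted metric). -/
theorem exists_bounded_exceptional_sets_of_lt_dist_add_one {X : Type*} {d : X → X → ℝ}
    {c : X → ℕ} (hbdd : ∀ n, BoundedD d (c ⁻¹' {n}))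
    (hsep : ∀ x y, c x ≠ c y → (c x : ℝ) < d x y + 1) (M : ℝ) :
    ∃ B : ℕ → Set X,
      (∀ n, B n ⊆ c ⁻¹' {n}) ∧ (∀ n, BoundedD d (B n)) ∧ {n | (B n).Nonempty}.Finite ∧
        ∀ x y, c x ≠ c y → x ∉ B (c x) → y ∉ B (c y) → d x y > M := by
  set N := ⌊M⌋₊ + 1
  have hsub : ∀ n, {x | c x = n ∧ n ≤ N} ⊆ c ⁻¹' {n} := fun n x hx => hx.1
  refine ⟨fun n => {x | c x = n ∧ n ≤ N}, hsub, fun n => (hbdd n).mono (hsub n), ?_, ?_⟩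
  · exact (Set.finite_Iic N).subset fun n ⟨x, hx⟩ => hx.2
  · intro x y hxy hx _
    have hN : N < c x := lt_of_not_ge fun h => hx ⟨rfl, h⟩
    have hM : M + 1 < c x := calc
      M + 1 < (N : ℝ) + 1 := by simpa [N] using Nat.lt_floor_add_one M
      _ ≤ c x := by exact_mod_cast hN
    linarith [hsep x y hxy]

namespace IsUltrametricDist

variable {X : Type*} [PseudoMetricSpace X] [IsUltrametricDist X] {x y x₀ : X}

theorem dist_eq_of_dist_lt (h : dist x x₀ < dist y x₀) : dist x y = dist y x₀ := by
  rw [dist_eq_max_of_dist_ne_dist x x₀ y (by rw [dist_comm x₀ y]; exact h.ne), dist_comm x₀ y,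
    max_eq_right h.le]

theorem dist_le_of_dist_le {r : ℝ} (hx : dist x x₀ ≤ r) (hy : dist y x₀ ≤ r) :
    dist x y ≤ r :=
  (dist_triangle_max x x₀ y).trans (max_le hx (dist_comm x₀ y ▸ hy))

theorem boundedD_ceil_dist_preimage (x₀ : X) (n : ℕ) :
    BoundedD dist ((⌈dist · x₀⌉₊) ⁻¹' {n}) :=
  ⟨n, fun _ hx _ hy => dist_le_of_dist_le (Nat.ceil_le.1 hx.le) (Nat.ceil_le.1 hy.le)⟩

theorem ceil_dist_lt_dist_add_one (h : ⌈dist x x₀⌉₊ ≠ ⌈dist y x₀⌉₊) :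
    (⌈dist x x₀⌉₊ : ℝ) < dist x y + 1 := by
  rcases h.lt_or_gt with h | h
  · have hsucc : (⌈dist x x₀⌉₊ : ℝ) + 1 ≤ ⌈dist y x₀⌉₊ := by exact_mod_cast h
    rw [dist_eq_of_dist_lt (Nat.ceil_mono.reflect_lt h)]
    linarith [Nat.ceil_lt_add_one (dist_nonneg : 0 ≤ dist y x₀)]
  · rw [dist_comm x y, dist_eq_of_dist_lt (Nat.ceil_mono.reflect_lt h)]
    exact Nat.ceil_lt_add_one dist_nonneg

end IsUltrametricDist

open IsUltrametricDist in
theorem integral_ultrametric_coarse_disjoint_union_of_bounded_subsets_general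
    {X : Type*} [MetricSpace X] [Nonempty X]
    (hu : IsUltraD (dist : X → X → ℝ)) :
    ∃ c : X → ℕ, (∀ n : ℕ, BoundedD (dist : X → X → ℝ) (c ⁻¹' {n})) ∧
      ∀ M > (0 : ℝ), ∃ B : ℕ → Set X,
        (∀ n : ℕ, B n ⊆ c ⁻¹' {n}) ∧ (∀ n : ℕ, BoundedD (dist : X → X → ℝ) (B n)) ∧
        {n | (B n).Nonempty}.Finite ∧
        ∀ x y : X, c x ≠ c y → x ∉ B (c x) → y ∉ B (c y) → dist x y > M := by
  obtain ⟨x₀⟩ := ‹Nonempty X›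
  have : IsUltrametricDist X := ⟨hu⟩
  exact ⟨_, boundedD_ceil_dist_preimage x₀, fun M _ =>
    exists_bounded_exceptional_sets_of_lt_dist_add_one (boundedD_ceil_dist_preimage x₀)
      (fun _ _ => ceil_dist_lt_dist_add_one) M⟩

/-- Every nonempty integral ultrametric space can be partitioned into
countably many bounded subsets of which it is a coarse disjoint union. -/
theorem integral_ultrametric_coarse_disjoint_union_of_bounded_subsets
    {X : Type*} [MetricSpace X] [Nonempty X]
    (hu : IsUltraD (dist : X → X → ℝ))
    (hint : ∀ x y : X, ∃ n : ℕ, dist x y = (n : ℝ)) :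
    ∃ c : X → ℕ, (∀ n : ℕ, BoundedD (dist : X → X → ℝ) (c ⁻¹' {n})) ∧
      ∀ M > (0 : ℝ), ∃ B : ℕ → Set X,
        (∀ n : ℕ, B n ⊆ c ⁻¹' {n}) ∧ (∀ n : ℕ, BoundedD (dist : X → X → ℝ) (B n)) ∧
        {n | (B n).Nonempty}.Finite ∧
        ∀ x y : X, c x ≠ c y → x ∉ B (c x) → y ∉ B (c y) → dist x y > M :=
  integral_ultrametric_coarse_disjoint_union_of_bounded_subsets_general hu
end

section
/- For every finite set D of nonnegative integers containing 0 and every m ≥ 1, there exists a finite D-ultrametric space FU(m, D) such that every D-ultrametric space X with at most m points admits an isometric embedding into FU(m, D). -/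
/-!
An ultrametric analogue of the Kuratowski embedding. On `ι → α` (`α` linearly ordered with a
bottom) let `ultraDist f g` be the largest value `max (f i) (g i)` over the coordinates where `f`
and `g` disagree. This is an ultrametric, and a finite ultrametric space `Z` embeds isometrically
into `Z → α` via `a ↦ d a`: for `a ≠ b` the coordinate `b` gives `ultraDist (d a) (d b) ≥ d a b`,
and at any coordinate `z` with `d a z ≠ d b z` the ultrametric triangle is isosceles with `d a b`
as its largest side. Padding by `⊥` along an injection `Z → Fin m` changes no distance, and
`ultraDist` only takes values in the distance set and `⊥`, so `Fin m → D` is the universal space.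
-/

open Finset Function

section UltraDist

variable {ι α : Type*} [Fintype ι] [LinearOrder α] [OrderBot α]

def ultraDist (f g : ι → α) : α :=
  univ.sup fun i => if f i = g i then ⊥ else max (f i) (g i)

theorem ultraDist_le_iff {f g : ι → α} {a : α} :
    ultraDist f g ≤ a ↔ ∀ i, f i ≠ g i → max (f i) (g i) ≤ a := by
  simp only [ultraDist, Finset.sup_le_iff, mem_univ, true_implies]
  refine forall_congr' fun i => ?_
  split_ifs with h <;> simp [h]

theorem max_le_ultraDist {f g : ι → α} {i : ι} (h : f i ≠ g i) :
    max (f i) (g i) ≤ ultraDist f g :=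
  ultraDist_le_iff.mp le_rfl i h

theorem ultraDist_self (f : ι → α) : ultraDist f f = ⊥ :=
  le_bot_iff.mp <| ultraDist_le_iff.mpr fun _ h => absurd rfl h

theorem eq_of_ultraDist_eq_bot {f g : ι → α} (h : ultraDist f g = ⊥) : f = g := by
  by_contra hfg
  obtain ⟨i, hi⟩ := ne_iff.mp hfg
  have hbot := h ▸ max_le_ultraDist hi
  rw [le_bot_iff, _root_.max_eq_bot] at hbot
  exact hi (hbot.1.trans hbot.2.symm)

theorem ultraDist_comm (f g : ι → α) : ultraDist f g = ultraDist g f := by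
  simp only [ultraDist, eq_comm (a := f _), max_comm (f _)]

theorem ultraDist_le_max (f g h : ι → α) :
    ultraDist f h ≤ max (ultraDist f g) (ultraDist g h) := by
  refine ultraDist_le_iff.mpr fun i hfh => ?_
  by_cases hfg : f i = g i
  · rw [hfg] at hfh ⊢
    exact (max_le_ultraDist hfh).trans (le_max_right _ _)
  by_cases hgh : g i = h i
  · rw [← hgh]
    exact (max_le_ultraDist hfg).trans (le_max_left _ _)
  calc max (f i) (h i) ≤ max (max (f i) (g i)) (max (g i) (h i)) :=
        max_le (le_max_of_le_left (le_max_left _ _)) (le_max_of_le_right (le_max_right _ _))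
    _ ≤ _ := max_le_max (max_le_ultraDist hfg) (max_le_ultraDist hgh)

theorem ultraDist_mem {S : Set α} (hS : ⊥ ∈ S) {f g : ι → α} (hf : ∀ i, f i ∈ S)
    (hg : ∀ i, g i ∈ S) : ultraDist f g ∈ S := by
  refine sup_mem S hS (fun x hx y hy => ?_) _ _ fun i _ => ?_
  · rcases max_choice x y with h | h <;> rw [h] <;> assumption
  · split_ifs
    · exact hS
    · rcases max_choice (f i) (g i) with h | h <;> rw [h]
      exacts [hf i, hg i]

theorem ultraDist_extend {κ : Type*} [Fintype κ] {j : κ → ι} (hj : Injective j)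
    (f g : κ → α) (e : ι → α) : ultraDist (extend j f e) (extend j g e) = ultraDist f g := by
  refine le_antisymm (ultraDist_le_iff.mpr fun i hi => ?_) (ultraDist_le_iff.mpr fun z hz => ?_)
  · by_cases hij : ∃ z, j z = i
    · obtain ⟨z, rfl⟩ := hij
      rw [hj.extend_apply, hj.extend_apply] at hi ⊢
      exact max_le_ultraDist hi
    · exact absurd (by rw [extend_apply' _ _ _ hij, extend_apply' _ _ _ hij]) hi
  · rw [← hj.extend_apply f e, ← hj.extend_apply g e] at hz ⊢
    exact max_le_ultraDist hz

theorem ultraDist_apply_eq {Z : Type*} [Fintype Z] {d : Z → Z → α} (hself : ∀ a, d a a = ⊥)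
    (hsymm : ∀ a b, d a b = d b a) (hultra : ∀ a b c, d a c ≤ max (d a b) (d b c))
    (a b : Z) : ultraDist (d a) (d b) = d a b := by
  refine le_antisymm (ultraDist_le_iff.mpr fun z hz => ?_) ?_
  · have haz := hultra a b z
    have hbz := hultra b a z
    rw [hsymm b a] at hbz
    rcases le_total (d a z) (d b z) with h | h
    · rw [max_eq_right h]
      exact le_of_not_gt fun hlt => hz (h.antisymm (by simpa [hlt.not_ge] using hbz))
    · rw [max_eq_left h]
      exact le_of_not_gt fun hlt => hz (le_antisymm (by simpa [hlt.not_ge] using haz) h)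
  · by_cases hab : d a b = d b b
    · rw [hab, hself]
      exact bot_le
    · simpa [hself] using max_le_ultraDist hab

theorem exists_ultraDist_embedding {Z : Type*} [Fintype Z] {S : Set α} (hS : ⊥ ∈ S)
    {d : Z → Z → α} (hd : ∀ a b, d a b ∈ S) (hself : ∀ a, d a a = ⊥)
    (hsymm : ∀ a b, d a b = d b a) (hultra : ∀ a b c, d a c ≤ max (d a b) (d b c))
    {j : Z → ι} (hj : Injective j) :
    ∃ e : Z → ι → S, ∀ a b, ultraDist (Subtype.val ∘ e a) (Subtype.val ∘ e b) = d a b := by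
  refine ⟨fun a i => ⟨extend j (d a) (fun _ => ⊥) i, ?_⟩, fun a b => ?_⟩
  · classical
    rw [extend_def]
    split_ifs
    exacts [hd _ _, hS]
  · change ultraDist (extend j (d a) _) (extend j (d b) _) = d a b
    rw [ultraDist_extend hj, ultraDist_apply_eq hself hsymm hultra]

end UltraDist

section NatCast

variable {X : Type*} {d : X → X → ℕ}

theorem isUltraD_natCast_iff :
    IsUltraD (fun x y => (d x y : ℝ)) ↔ ∀ x y z, d x z ≤ max (d x y) (d y z) := by
  simp only [IsUltraD, ← Nat.cast_max, Nat.cast_le]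

theorem isMetricD_natCast_iff :
    IsMetricD (fun x y => (d x y : ℝ)) ↔ (∀ x, d x x = 0) ∧ (∀ x y, d x y = 0 → x = y) ∧
      (∀ x y, d x y = d y x) ∧ ∀ x y z, d x z ≤ d x y + d y z := by
  simp only [IsMetricD, ← Nat.cast_add, Nat.cast_le, Nat.cast_inj, Nat.cast_eq_zero]

end NatCast

theorem finite_universal_D_ultrametric_space_general
    (D : Finset ℕ) (hD : 0 ∈ D) (m : ℕ) :
    ∃ (F : Type) (dF : F → F → ℝ), Finite F ∧ IsMetricD dF ∧ IsUltraD dF ∧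
      (∀ a b : F, ∃ n ∈ D, dF a b = (n : ℝ)) ∧
      ∀ (Z : Type u) (dZ : Z → Z → ℝ), IsMetricD dZ → IsUltraD dZ →
        (∀ a b : Z, ∃ n ∈ D, dZ a b = (n : ℝ)) → Finite Z → Nat.card Z ≤ m →
        ∃ e : Z → F, ∀ a b : Z, dF (e a) (e b) = dZ a b := by
  refine ⟨Fin m → D, fun f g => (ultraDist (Subtype.val ∘ f) (Subtype.val ∘ g) : ℕ),
    inferInstance, ?metric, isUltraD_natCast_iff.mpr fun _ _ _ => ultraDist_le_max _ _ _,
    fun f g => ⟨_, ultraDist_mem (S := (D : Set ℕ)) hD (fun i => (f i).2) (fun i => (g i).2), rfl⟩,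
    fun Z dZ hMZ hUZ hDZ _ hcard => ?embedding⟩
  case metric =>
    refine isMetricD_natCast_iff.mpr ⟨fun f => ultraDist_self _,
      fun f g h => Subtype.val_injective.comp_left (eq_of_ultraDist_eq_bot h),
      fun f g => ultraDist_comm _ _, fun f g h => ?_⟩
    exact (ultraDist_le_max _ (Subtype.val ∘ g) _).trans
      (max_le_add_of_nonneg (Nat.zero_le _) (Nat.zero_le _))
  case embedding =>
    choose nd hndD hnd using hDZ
    obtain rfl : dZ = fun a b => (nd a b : ℝ) := funext₂ hnd
    obtain ⟨hself, -, hsymm, -⟩ := isMetricD_natCast_iff.mp hMZ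
    have : Fintype Z := Fintype.ofFinite Z
    have hj : Injective (Fin.castLE hcard ∘ Finite.equivFin Z) :=
      (Fin.castLE_injective hcard).comp (Finite.equivFin Z).injective
    obtain ⟨e, he⟩ := exists_ultraDist_embedding (S := (D : Set ℕ)) hD hndD hself hsymm
      (isUltraD_natCast_iff.mp hUZ) hj
    exact ⟨e, fun a b => congrArg Nat.cast (he a b)⟩

/-- For every finite set `D` of nonnegative integers containing `0` and
every `m ≥ 1` there is a finite `D`-ultrametric space `FU(m, D)` into which every
`D`-ultrametric space with at most `m` points isometrically embeds. -/
theorem finite_universal_D_ultrametric_space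
    (D : Finset ℕ) (hD : 0 ∈ D) (m : ℕ) (hm : 1 ≤ m) :
    ∃ (F : Type) (dF : F → F → ℝ), Finite F ∧ IsMetricD dF ∧ IsUltraD dF ∧
      (∀ a b : F, ∃ n ∈ D, dF a b = (n : ℝ)) ∧
      ∀ (Z : Type u) (dZ : Z → Z → ℝ), IsMetricD dZ → IsUltraD dZ →
        (∀ a b : Z, ∃ n ∈ D, dZ a b = (n : ℝ)) → Finite Z → Nat.card Z ≤ m →
        ∃ e : Z → F, ∀ a b : Z, dF (e a) (e b) = dZ a b :=
  finite_universal_D_ultrametric_space_general D hD m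
end

section
/- There exists a countable integral ultrametric space CU such that every countable integral ultrametric space admits an isometric embedding into CU. -/
/-!
In an ultrametric space the closed balls of a fixed radius partition the space, and two points
lie in the same ball of radius `n` exactly when their distance is at most `n`. Enumerating a
countable space as `f 0, f 1, …`, record for each integer radius `n` the least index `i` with
`f i` in the ball of radius `n` around `z`. This code of `z` vanishes for large `n`, and the codes
of `a` and `b` agree at `n` exactly when `d a b ≤ n`. Hence `⌈d a b⌉₊` is the least `m` from which
on the codes agree, and that quantity is an integral ultrametric on `ℕ →₀ ℕ`.
-/

open Finset

section NeLocusBound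

variable {M : Type*} [Zero M] [DecidableEq M]

def neLocusBound (σ τ : ℕ →₀ M) : ℕ :=
  (σ.neLocus τ).sup (· + 1)

theorem neLocusBound_le_iff {σ τ : ℕ →₀ M} {m : ℕ} :
    neLocusBound σ τ ≤ m ↔ ∀ n, m ≤ n → σ n = τ n := by
  simp only [neLocusBound, Finset.sup_le_iff, Finsupp.mem_neLocus, Nat.add_one_le_iff]
  exact forall_congr' fun n => by rw [not_imp_comm, not_lt]

theorem neLocusBound_eq_zero_iff {σ τ : ℕ →₀ M} : neLocusBound σ τ = 0 ↔ σ = τ := by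
  rw [← Nat.le_zero, neLocusBound_le_iff, Finsupp.ext_iff]
  simp only [zero_le, true_imp_iff]

theorem neLocusBound_comm (σ τ : ℕ →₀ M) : neLocusBound σ τ = neLocusBound τ σ := by
  rw [neLocusBound, Finsupp.neLocus_comm, neLocusBound]

theorem neLocusBound_le_max (σ τ υ : ℕ →₀ M) :
    neLocusBound σ υ ≤ max (neLocusBound σ τ) (neLocusBound τ υ) :=
  neLocusBound_le_iff.2 fun n hn =>
    (neLocusBound_le_iff.1 le_rfl n (le_of_max_le_left hn)).trans
      (neLocusBound_le_iff.1 le_rfl n (le_of_max_le_right hn))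

theorem isUltraD_neLocusBound :
    IsUltraD fun σ τ : ℕ →₀ M => (neLocusBound σ τ : ℝ) := fun σ τ υ => by
  dsimp only
  exact_mod_cast neLocusBound_le_max σ τ υ

theorem isMetricD_neLocusBound :
    IsMetricD fun σ τ : ℕ →₀ M => (neLocusBound σ τ : ℝ) := by
  refine ⟨fun σ => ?_, fun σ τ h => ?_, fun σ τ => ?_, fun σ τ υ => ?_⟩ <;> dsimp only at *
  · exact_mod_cast neLocusBound_eq_zero_iff.2 rfl
  · exact neLocusBound_eq_zero_iff.1 (by exact_mod_cast h)
  · rw [neLocusBound_comm]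
  · exact (isUltraD_neLocusBound σ τ υ).trans
      (max_le_add_of_nonneg (Nat.cast_nonneg _) (Nat.cast_nonneg _))

end NeLocusBound

section BallCode

variable {Z : Type*} (d : Z → Z → ℝ) (f : ℕ → Z)

noncomputable def ballIndex (z : Z) (n : ℕ) : ℕ :=
  sInf {i | d z (f i) ≤ n}

theorem ballIndex_eq_zero_of_le {z : Z} {n : ℕ} (h : d z (f 0) ≤ n) : ballIndex d f z n = 0 :=
  Nat.sInf_eq_zero.2 (Or.inl h)

variable {d f}

theorem ballIndex_eq_iff (hself : ∀ x, d x x = 0) (hsymm : ∀ x y, d x y = d y x)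
    (hultra : IsUltraD d) (hf : f.Surjective) {a b : Z} {n : ℕ} :
    ballIndex d f a n = ballIndex d f b n ↔ d a b ≤ n := by
  have ball_nonempty : ∀ z, {i | d z (f i) ≤ n}.Nonempty := fun z => by
    obtain ⟨i, rfl⟩ := hf z
    exact ⟨i, by simp [hself]⟩
  constructor
  · intro h
    have ha : d a (f (ballIndex d f b n)) ≤ n := h ▸ Nat.sInf_mem (ball_nonempty a)
    have hb : d b (f (ballIndex d f b n)) ≤ n := Nat.sInf_mem (ball_nonempty b)
    exact (hultra _ _ _).trans (max_le ha (hsymm _ b ▸ hb))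
  · intro hab
    have same_ball : ∀ x y, d x y ≤ n → ∀ i, d x (f i) ≤ n → d y (f i) ≤ n :=
      fun x y hxy i hx => (hultra _ _ _).trans (max_le (hsymm x y ▸ hxy) hx)
    exact congrArg sInf (Set.ext fun i =>
      ⟨same_ball a b hab i, same_ball b a (hsymm a b ▸ hab) i⟩)

variable (d f)

noncomputable def ballCode (z : Z) : ℕ →₀ ℕ :=
  Finsupp.onFinset (range ⌈d z (f 0)⌉₊) (ballIndex d f z) fun n hn => by
    rw [mem_range]
    by_contra hle
    exact hn (ballIndex_eq_zero_of_le d f (Nat.ceil_le.1 (not_lt.1 hle)))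

variable {d f}

theorem neLocusBound_ballCode (hself : ∀ x, d x x = 0) (hsymm : ∀ x y, d x y = d y x)
    (hultra : IsUltraD d) (hf : f.Surjective) (a b : Z) :
    neLocusBound (ballCode d f a) (ballCode d f b) = ⌈d a b⌉₊ := by
  refine eq_of_forall_ge_iff fun m => ?_
  simp only [neLocusBound_le_iff, ballCode, Finsupp.onFinset_apply,
    ballIndex_eq_iff hself hsymm hultra hf, Nat.ceil_le]
  exact ⟨fun h => h m le_rfl, fun h n hn => h.trans (Nat.cast_le.2 hn)⟩

end BallCode

theorem exists_neLocusBound_eq_ceil {Z : Type*} [Countable Z] {d : Z → Z → ℝ}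
    (hself : ∀ x, d x x = 0) (hsymm : ∀ x y, d x y = d y x) (hultra : IsUltraD d) :
    ∃ e : Z → ℕ →₀ ℕ, ∀ a b, neLocusBound (e a) (e b) = ⌈d a b⌉₊ := by
  cases isEmpty_or_nonempty Z
  · exact ⟨isEmptyElim, isEmptyElim⟩
  obtain ⟨f, hf⟩ := exists_surjective_nat Z
  exact ⟨ballCode d f, neLocusBound_ballCode hself hsymm hultra hf⟩

/-- There is a countable integral ultrametric space `CU` into which every
countable integral ultrametric space isometrically embeds. -/
theorem countable_universal_integral_ultrametric_space :
    ∃ (CU : Type) (dC : CU → CU → ℝ), Countable CU ∧ IsMetricD dC ∧ IsUltraD dC ∧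
      (∀ a b : CU, ∃ n : ℕ, dC a b = (n : ℝ)) ∧
      ∀ (Z : Type u) (dZ : Z → Z → ℝ), Countable Z → IsMetricD dZ → IsUltraD dZ →
        (∀ a b : Z, ∃ n : ℕ, dZ a b = (n : ℝ)) →
        ∃ e : Z → CU, ∀ a b : Z, dC (e a) (e b) = dZ a b := by
  refine ⟨ℕ →₀ ℕ, fun σ τ => neLocusBound σ τ, inferInstance, isMetricD_neLocusBound,
    isUltraD_neLocusBound, fun σ τ => ⟨_, rfl⟩, ?_⟩
  rintro Z dZ _ ⟨hself, -, hsymm, -⟩ hultra hint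
  obtain ⟨e, he⟩ := exists_neLocusBound_eq_ceil hself hsymm hultra
  refine ⟨e, fun a b => ?_⟩
  obtain ⟨n, hn⟩ := hint a b
  simp only [he, hn, Nat.ceil_natCast]
end
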